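/- arXiv:1301.7236 — 7 statements merged into one kernel-verified Lean document; each statement's English description precedes it below -/
import Mathlib

section
/- Two-wrongs-make-a-right lemma: Let r⁽¹⁾(x) = b(x)Λ⁽¹⁾(x) mod m(x) and r⁽²⁾(x) = b(x)Λ⁽²⁾(x) mod m(x), with d₁ = deg r⁽¹⁾(x), d₂ = deg r⁽²⁾(x), κ₁ = lcf r⁽¹⁾(x), κ₂ = lcf r⁽²⁾(x), and suppose d₁ ≥ d₂ ≥ 0. Then Λ(x) := κ₂Λ⁽¹⁾(x) − κ₁x^{d₁−d₂}Λ⁽²⁾(x) satisfies deg(b(x)Λ(x) mod m(x)) < d₁. -/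
/-!
The remainders `r₁, r₂` are computed modulo `m`, so `bΛ ≡ κ₂ r₁ − κ₁ x^{d₁−d₂} r₂ (mod m)`.
The right-hand side is the first step of long division of `r₁` by `r₂`: both terms have degree
`d₁` and leading coefficient `κ₁κ₂`, so their difference has degree `< d₁ = deg r₁`. Being of
smaller degree than a remainder modulo `m`, it is its own remainder (also when `m = 0`, since
`p % 0 = p`).
-/

open Polynomial

namespace Polynomial

theorem degree_C_leadingCoeff_mul_sub_lt {R : Type*} [CommRing R] [IsDomain R]
    {p q : R[X]} (hq : q ≠ 0) (hqp : q.degree ≤ p.degree) :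
    (C q.leadingCoeff * p - C p.leadingCoeff * X ^ (p.natDegree - q.natDegree) * q).degree
      < p.degree := by
  have hp : p ≠ 0 := ne_zero_of_degree_ge_degree hqp hq
  have hκq : q.leadingCoeff ≠ 0 := leadingCoeff_ne_zero.mpr hq
  have hκp : p.leadingCoeff ≠ 0 := leadingCoeff_ne_zero.mpr hp
  have hscaled : (C q.leadingCoeff * p).degree = p.degree := degree_C_mul hκq
  have hshifted :
      (C p.leadingCoeff * X ^ (p.natDegree - q.natDegree) * q).degree = p.degree := by
    rw [mul_assoc, degree_C_mul hκp, degree_mul, degree_X_pow, degree_eq_natDegree hq,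
      degree_eq_natDegree hp, ← Nat.cast_add,
      Nat.sub_add_cancel (natDegree_le_natDegree hqp)]
  have hlc : (C q.leadingCoeff * p).leadingCoeff
      = (C p.leadingCoeff * X ^ (p.natDegree - q.natDegree) * q).leadingCoeff := by
    simp only [leadingCoeff_mul, leadingCoeff_C, leadingCoeff_X_pow, one_mul, mul_comm]
  calc _ < (C q.leadingCoeff * p).degree :=
        degree_sub_lt_left (hscaled.trans hshifted.symm) (mul_ne_zero (C_ne_zero.mpr hκq) hp) hlc
    _ = p.degree := hscaled

variable {F : Type*} [Field F]

theorem mul_sub_mul_mod (u v f g m : F[X]) :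
    (u * f - v * g) % m = (u * (f % m) - v * (g % m)) % m := by
  refine mod_eq_of_dvd_sub ⟨u * (f / m) - v * (g / m), ?_⟩
  linear_combination v * EuclideanDomain.div_add_mod g m - u * EuclideanDomain.div_add_mod f m

theorem mod_eq_self_of_degree_lt_degree_mod {p f m : F[X]} (h : p.degree < (f % m).degree) :
    p % m = p := by
  rcases eq_or_ne m 0 with rfl | hm
  · exact EuclideanDomain.mod_zero p
  · exact (mod_eq_self_iff hm).mpr (h.trans (degree_mod_lt f hm))

end Polynomial

theorem two_wrongs_make_a_right_general {F : Type*} [Field F] (m b Λ₁ Λ₂ r₁ r₂ : F[X])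
    (hr₁ : r₁ = b * Λ₁ % m) (hr₂ : r₂ = b * Λ₂ % m)
    (hd₂ : 0 ≤ r₂.degree) (hd₁₂ : r₂.degree ≤ r₁.degree) :
    (b * (C r₂.leadingCoeff * Λ₁ -
        C r₁.leadingCoeff * X ^ (r₁.natDegree - r₂.natDegree) * Λ₂) % m).degree
      < r₁.degree := by
  set k := r₁.natDegree - r₂.natDegree
  have hr₂0 : r₂ ≠ 0 := by
    rintro rfl
    simp at hd₂
  have hdrop := degree_C_leadingCoeff_mul_sub_lt hr₂0 hd₁₂
  have hreduce : b * (C r₂.leadingCoeff * Λ₁ - C r₁.leadingCoeff * X ^ k * Λ₂) % m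
      = (C r₂.leadingCoeff * r₁ - C r₁.leadingCoeff * X ^ k * r₂) % m := by
    rw [hr₁, hr₂, ← mul_sub_mul_mod]
    congr 1
    ring
  rw [hreduce, mod_eq_self_of_degree_lt_degree_mod (f := b * Λ₁) (hr₁ ▸ hdrop)]
  exact hdrop

/-- Two-wrongs-make-a-right lemma: with `r⁽ⁱ⁾ = bΛ⁽ⁱ⁾ mod m`, `dᵢ = deg r⁽ⁱ⁾`,
`κᵢ = lcf r⁽ⁱ⁾`, and `d₁ ≥ d₂ ≥ 0`, the polynomial
`Λ = κ₂Λ⁽¹⁾ − κ₁x^{d₁−d₂}Λ⁽²⁾` satisfies `deg(bΛ mod m) < d₁`. -/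
theorem two_wrongs_make_a_right {F : Type*} [Field F] (m b Λ₁ Λ₂ r₁ r₂ : F[X])
    (hm : 1 ≤ m.degree)
    (hr₁ : r₁ = b * Λ₁ % m) (hr₂ : r₂ = b * Λ₂ % m)
    (hd₂ : 0 ≤ r₂.degree) (hd₁₂ : r₂.degree ≤ r₁.degree) :
    (b * (C r₂.leadingCoeff * Λ₁ -
        C r₁.leadingCoeff * X ^ (r₁.natDegree - r₂.natDegree) * Λ₂) % m).degree
      < r₁.degree :=
  two_wrongs_make_a_right_general m b Λ₁ Λ₂ r₁ r₂ hr₁ hr₂ hd₂ hd₁₂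
end

section
/- Uniqueness of the minimal-degree solution: If Λ⁽¹⁾(x) and Λ⁽²⁾(x) are two nonzero polynomials of the smallest degree among all nonzero Λ with deg(b(x)Λ(x) mod m(x)) < d, then Λ⁽¹⁾(x) and Λ⁽²⁾(x) are equal up to a nonzero scalar factor. -/
open Polynomial

section PartialInverse

variable {F : Type*} [Field F]

/-- Subtracting the multiple of `q` with the same leading coefficient as `p` leaves an element
of `S` of smaller degree, which must vanish. -/
theorem Submodule.exists_C_mul_eq_of_natDegree_minimal {S : Submodule F F[X]} {p q : F[X]}
    (hp : p ∈ S) (hq : q ∈ S) (hp0 : p ≠ 0) (hq0 : q ≠ 0)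
    (hmin : ∀ r ∈ S, r ≠ 0 → p.natDegree ≤ r.natDegree) (hpq : p.natDegree = q.natDegree) :
    ∃ c : F, c ≠ 0 ∧ p = C c * q := by
  set c := p.leadingCoeff / q.leadingCoeff
  have hc : c ≠ 0 := div_ne_zero (leadingCoeff_ne_zero.mpr hp0) (leadingCoeff_ne_zero.mpr hq0)
  refine ⟨c, hc, sub_eq_zero.mp ?_⟩
  by_contra hr
  have hdeg : (p - C c * q).degree < p.degree := by
    apply degree_sub_lt_left _ hp0
    · rw [leadingCoeff_C_mul_of_isUnit hc.isUnit,
        div_mul_cancel₀ _ (leadingCoeff_ne_zero.mpr hq0)]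
    · rw [degree_C_mul hc, degree_eq_natDegree hp0, degree_eq_natDegree hq0, hpq]
  have hmem : p - C c * q ∈ S := S.sub_mem hp (C_mul' c q ▸ S.smul_mem c hq)
  exact (natDegree_lt_natDegree hr hdeg).not_ge (hmin _ hmem hr)

/-- `p % m` is by definition `p %ₘ` the monic associate of `m`, which makes reduction
modulo `m` a linear map. -/
noncomputable def partialInverseSolutions (b m : F[X]) (d : ℕ) : Submodule F F[X] :=
  (degreeLT F d).comap (modByMonicHom (m * C m.leadingCoeff⁻¹) ∘ₗ LinearMap.mulLeft F b)

theorem mem_partialInverseSolutions {b m Λ : F[X]} {d : ℕ} :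
    Λ ∈ partialInverseSolutions b m d ↔ (b * Λ % m).degree < d :=
  mem_degreeLT

end PartialInverse

theorem partial_inverse_solution_unique_general {F : Type*} [Field F] (b m : F[X])
    (d : ℕ)
    (Λ₁ Λ₂ : F[X]) (hΛ₁ : Λ₁ ≠ 0) (hΛ₂ : Λ₂ ≠ 0)
    (h₁ : (b * Λ₁ % m).degree < (d : WithBot ℕ))
    (h₂ : (b * Λ₂ % m).degree < (d : WithBot ℕ))
    (hmin₁ : ∀ Λ : F[X], Λ ≠ 0 → (b * Λ % m).degree < (d : WithBot ℕ) →
      Λ₁.natDegree ≤ Λ.natDegree)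
    (hmin₂ : ∀ Λ : F[X], Λ ≠ 0 → (b * Λ % m).degree < (d : WithBot ℕ) →
      Λ₂.natDegree ≤ Λ.natDegree) :
    ∃ c : F, c ≠ 0 ∧ Λ₁ = C c * Λ₂ :=
  Submodule.exists_C_mul_eq_of_natDegree_minimal (S := partialInverseSolutions b m d)
    (mem_partialInverseSolutions.mpr h₁) (mem_partialInverseSolutions.mpr h₂) hΛ₁ hΛ₂
    (fun Λ hΛ hΛ0 => hmin₁ Λ hΛ0 (mem_partialInverseSolutions.mp hΛ))
    (le_antisymm (hmin₁ Λ₂ hΛ₂ h₂) (hmin₂ Λ₁ hΛ₁ h₁))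

/-- Uniqueness of the minimal-degree solution of the Partial-Inverse Problem:
two nonzero minimal-degree solutions are equal up to a nonzero scalar factor. -/
theorem partial_inverse_solution_unique {F : Type*} [Field F] (b m : F[X])
    (hb : b ≠ 0) (hm : m ≠ 0) (hdeg : b.degree < m.degree)
    (d : ℕ) (hd1 : 1 ≤ d) (hd2 : d ≤ m.natDegree)
    (Λ₁ Λ₂ : F[X]) (hΛ₁ : Λ₁ ≠ 0) (hΛ₂ : Λ₂ ≠ 0)
    (h₁ : (b * Λ₁ % m).degree < (d : WithBot ℕ))
    (h₂ : (b * Λ₂ % m).degree < (d : WithBot ℕ))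
    (hmin₁ : ∀ Λ : F[X], Λ ≠ 0 → (b * Λ % m).degree < (d : WithBot ℕ) →
      Λ₁.natDegree ≤ Λ.natDegree)
    (hmin₂ : ∀ Λ : F[X], Λ ≠ 0 → (b * Λ % m).degree < (d : WithBot ℕ) →
      Λ₂.natDegree ≤ Λ.natDegree) :
    ∃ c : F, c ≠ 0 ∧ Λ₁ = C c * Λ₂ :=
  partial_inverse_solution_unique_general b m d Λ₁ Λ₂ hΛ₁ hΛ₂ h₁ h₂ hmin₁ hmin₂
end

section
/- Degree Change Lemma: Let Λ(x) be a minimal partial inverse of b(x) with r(x) = b(x)Λ(x) mod m(x), and suppose deg Λ(x) ≤ deg m(x) − deg r(x). Then any nonzero Λ⁽¹⁾(x) ∈ F[x] with deg(b(x)Λ⁽¹⁾(x) mod m(x)) < deg r(x) satisfies deg Λ⁽¹⁾(x) ≥ deg m(x) − deg r(x). -/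
/-!
Write `r₁ = bΛ₁ mod m`. Both `Λ₁ r` and `Λ r₁` are congruent to `bΛΛ₁` modulo `m`.
If `deg Λ₁ + deg r < deg m`, both have degree below `deg m` (the second because
`deg r₁ < deg r` and `deg Λ + deg r ≤ deg m`), so `Λ₁ r = Λ r₁`. Comparing degrees gives
`deg Λ₁ < deg Λ`, although `Λ₁` reaches a remainder of degree below `deg r`, contradicting
the minimality of `Λ`.
-/

open Polynomial

def MinimalPartialInverse {F : Type*} [Field F] (b m Λ : F[X]) : Prop :=
  Λ ≠ 0 ∧ ∀ Λ' : F[X], Λ' ≠ 0 →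
    (b * Λ' % m).degree ≤ (b * Λ % m).degree → Λ.natDegree ≤ Λ'.natDegree

theorem dvd_mul_mod_sub_mul_mod {R : Type*} [EuclideanDomain R] (a m x y : R) :
    m ∣ y * (a * x % m) - x * (a * y % m) :=
  ⟨x * (a * y / m) - y * (a * x / m), by
    rw [EuclideanDomain.mod_eq_sub_mul_div, EuclideanDomain.mod_eq_sub_mul_div]; ring⟩

namespace Polynomial

variable {R : Type*} [Semiring R] [NoZeroDivisors R] {p q r : R[X]}

theorem degree_mul_lt_degree_mul_iff_left (hp : p ≠ 0) :
    (p * q).degree < (p * r).degree ↔ q.degree < r.degree := by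
  rw [degree_mul, degree_mul]
  exact WithBot.add_lt_add_iff_left (degree_ne_bot.2 hp)

theorem degree_mul_lt_degree_mul_iff_right (hr : r ≠ 0) :
    (p * r).degree < (q * r).degree ↔ p.degree < q.degree := by
  rw [degree_mul, degree_mul]
  exact WithBot.add_lt_add_iff_right (degree_ne_bot.2 hr)

end Polynomial

theorem degree_change_lemma_general {F : Type*} [Field F] (b m Λ r : F[X])
    (hm : m ≠ 0)
    (hmin : MinimalPartialInverse b m Λ) (hr : r = b * Λ % m)
    (hΛdeg : Λ.natDegree + r.natDegree ≤ m.natDegree)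
    (Λ₁ : F[X]) (hΛ₁ : Λ₁ ≠ 0)
    (h₁ : (b * Λ₁ % m).degree < r.degree) :
    m.natDegree ≤ Λ₁.natDegree + r.natDegree := by
  obtain ⟨hΛ, hΛ_min⟩ := hmin
  set r₁ := b * Λ₁ % m
  have hr0 : r ≠ 0 := by rintro rfl; simp at h₁
  by_contra! hlt
  have hΛr : (Λ * r).degree ≤ m.degree := by
    rw [degree_eq_natDegree hm]
    exact degree_le_of_natDegree_le (natDegree_mul_le.trans hΛdeg)
  have hΛr₁_lt : (Λ * r₁).degree < (Λ * r).degree := (degree_mul_lt_degree_mul_iff_left hΛ).2 h₁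
  have hΛ₁r : (Λ₁ * r).degree < m.degree := degree_lt_degree (natDegree_mul_le.trans_lt hlt)
  have key : Λ₁ * r = Λ * r₁ := sub_eq_zero.mp <| eq_zero_of_dvd_of_degree_lt
    (hr ▸ dvd_mul_mod_sub_mul_mod b m Λ Λ₁)
    ((degree_sub_le _ _).trans_lt (max_lt hΛ₁r (hΛr₁_lt.trans_le hΛr)))
  have hdeg_lt : Λ₁.degree < Λ.degree :=
    (degree_mul_lt_degree_mul_iff_right hr0).1 (key ▸ hΛr₁_lt)
  exact (natDegree_lt_natDegree hΛ₁ hdeg_lt).not_ge (hΛ_min Λ₁ hΛ₁ (hr ▸ h₁.le))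

/-- Degree Change Lemma: if `Λ` is a minimal partial inverse of `b` with
`r = bΛ mod m` and `deg Λ ≤ deg m − deg r`, then any nonzero `Λ⁽¹⁾` with
`deg(bΛ⁽¹⁾ mod m) < deg r` satisfies `deg Λ⁽¹⁾ ≥ deg m − deg r`. -/
theorem degree_change_lemma {F : Type*} [Field F] (b m Λ r : F[X])
    (hb : b ≠ 0) (hm : m ≠ 0) (hdeg : b.degree < m.degree)
    (hmin : MinimalPartialInverse b m Λ) (hr : r = b * Λ % m)
    (hΛdeg : Λ.natDegree + r.natDegree ≤ m.natDegree)
    (Λ₁ : F[X]) (hΛ₁ : Λ₁ ≠ 0)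
    (h₁ : (b * Λ₁ % m).degree < r.degree) :
    m.natDegree ≤ Λ₁.natDegree + r.natDegree :=
  degree_change_lemma_general b m Λ r hm hmin hr hΛdeg Λ₁ hΛ₁ h₁
end

section
/- Alternative Key Equation (forward direction): If w_H(e) ≤ (n−k)/2, then the error locator polynomial Λ_e(x) satisfies deg(Y(x)Λ_e(x) mod m(x)) < n − (n−k)/2. -/
/-!
`Y - Cp` vanishes at every error-free position and `Λe` vanishes at every error position, so
`m ∣ (Y - Cp) Λe`, i.e. `Y Λe ≡ Cp Λe (mod m)`. Since `deg (Cp Λe) < k + w_H(e) ≤ n = deg m`, the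
remainder is `Cp Λe` itself, and `k + w_H(e) ≤ n - (n - k)/2` is the weight bound rearranged.
-/

open Polynomial

theorem WithBot.map_natCast_lt_of_lt {R : Type*} [Semiring R] [PartialOrder R]
    [IsStrictOrderedRing R] {a : WithBot ℕ} {d : ℕ} {r : R} (ha : a < d) (hr : (d : R) ≤ r) :
    a.map (Nat.cast : ℕ → R) < r := by
  induction a with
  | bot => exact WithBot.bot_lt_coe r
  | coe a =>
    rw [WithBot.map_coe, WithBot.coe_lt_coe]
    exact (Nat.cast_lt.2 (WithBot.coe_lt_coe.1 ha)).trans_le hr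

namespace Polynomial

theorem degree_mul_prod_X_sub_C_lt {R ι : Type*} [CommRing R] [Nontrivial R] {p : R[X]} {k : ℕ}
    (hp : p.degree < k) (s : Finset ι) (f : ι → R) :
    (p * ∏ i ∈ s, (X - C (f i))).degree < ↑(k + s.card) := by
  have hmonic : (∏ i ∈ s, (X - C (f i))).Monic := monic_prod_of_monic _ _ fun i _ => monic_X_sub_C _
  rw [hmonic.degree_mul, degree_eq_natDegree hmonic.ne_zero, natDegree_finsetProd_X_sub_C_eq_card,
    Nat.cast_add]
  exact WithBot.add_lt_add_right (WithBot.coe_ne_bot) hp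

theorem prod_X_sub_C_dvd_mul_prod_X_sub_C {K ι : Type*} [Field K] [Fintype ι] {β : ι → K}
    (hβ : Function.Injective β) (s : Finset ι) {p : K[X]} (hp : ∀ i ∉ s, p.eval (β i) = 0) :
    ∏ i, (X - C (β i)) ∣ p * ∏ i ∈ s, (X - C (β i)) := by
  refine Finset.prod_dvd_of_coprime (fun i _ j _ hij => pairwise_coprime_X_sub_C hβ hij)
    fun i _ => ?_
  by_cases hi : i ∈ s
  · exact (Finset.dvd_prod_of_mem _ hi).mul_left _
  · exact (dvd_iff_isRoot.2 (hp i hi)).mul_right _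

end Polynomial

theorem alternative_key_equation_forward_general {F : Type*} [Field F] [DecidableEq F]
    (n k : ℕ) (β : Fin n → F) (hβ : Function.Injective β)
    (m : F[X]) (hm : m = ∏ ℓ : Fin n, (X - C (β ℓ)))
    (c e : Fin n → F)
    -- `c` is a codeword: `deg ψ⁻¹(c) < k`
    (Cp : F[X]) (hCdeg : Cp.degree < k) (hC : ∀ ℓ, Cp.eval (β ℓ) = c ℓ)
    -- `Y = ψ⁻¹(y)` for the received word `y = c + e`
    (Y : F[X]) (hY : ∀ ℓ, Y.eval (β ℓ) = c ℓ + e ℓ)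
    (Λe : F[X]) (hΛe : Λe = ∏ ℓ ∈ Finset.univ.filter (fun ℓ => e ℓ ≠ 0), (X - C (β ℓ)))
    (hw : ((Finset.univ.filter (fun ℓ => e ℓ ≠ 0)).card : ℝ) ≤ ((n : ℝ) - k) / 2) :
    (Y * Λe % m).degree.map (Nat.cast : ℕ → ℝ)
      < ((n : ℝ) - ((n : ℝ) - k) / 2 : ℝ) := by
  set s := Finset.univ.filter (fun ℓ => e ℓ ≠ 0)
  have hdvd : m ∣ (Y - Cp) * Λe := by
    rw [hm, hΛe]
    refine prod_X_sub_C_dvd_mul_prod_X_sub_C hβ s fun ℓ hℓ => ?_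
    have he : e ℓ = 0 := by simpa [s] using hℓ
    simp [hY, hC, he]
  have hdeg : (Cp * Λe).degree < ↑(k + s.card) := hΛe ▸ degree_mul_prod_X_sub_C_lt hCdeg s β
  have hkn : k + s.card ≤ n := by
    have : ((k + s.card : ℕ) : ℝ) ≤ n := by push_cast; linarith
    exact_mod_cast this
  have hmonic : m.Monic := hm ▸ monic_prod_of_monic _ _ fun ℓ _ => monic_X_sub_C _
  have hmdeg : m.degree = n := by
    rw [degree_eq_natDegree hmonic.ne_zero, hm, natDegree_finsetProd_X_sub_C_eq_card,
      Finset.card_univ, Fintype.card_fin]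
  have hmod : Y * Λe % m = Cp * Λe := by
    rw [mod_eq_of_dvd_sub (by rwa [← sub_mul]), (mod_eq_self_iff hmonic.ne_zero).2]
    exact hdeg.trans_le (hmdeg ▸ by exact_mod_cast hkn)
  rw [hmod]
  exact WithBot.map_natCast_lt_of_lt hdeg (by push_cast; linarith)

/-- Alternative Key Equation (forward direction): if `w_H(e) ≤ (n−k)/2`, then
the error locator polynomial `Λ_e` satisfies
`deg(Y(x)Λ_e(x) mod m(x)) < n − (n−k)/2`. -/
theorem alternative_key_equation_forward {F : Type*} [Field F] [Fintype F] [DecidableEq F]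
    (n k : ℕ) (β : Fin n → F) (hβ : Function.Injective β)
    (m : F[X]) (hm : m = ∏ ℓ : Fin n, (X - C (β ℓ)))
    (c e : Fin n → F)
    -- `c` is a codeword: `deg ψ⁻¹(c) < k`
    (Cp : F[X]) (hCdeg : Cp.degree < k) (hC : ∀ ℓ, Cp.eval (β ℓ) = c ℓ)
    -- `Y = ψ⁻¹(y)` for the received word `y = c + e`
    (Y : F[X]) (hYdeg : Y.degree < n) (hY : ∀ ℓ, Y.eval (β ℓ) = c ℓ + e ℓ)
    (Λe : F[X]) (hΛe : Λe = ∏ ℓ ∈ Finset.univ.filter (fun ℓ => e ℓ ≠ 0), (X - C (β ℓ)))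
    (hw : ((Finset.univ.filter (fun ℓ => e ℓ ≠ 0)).card : ℝ) ≤ ((n : ℝ) - k) / 2) :
    (Y * Λe % m).degree.map (Nat.cast : ℕ → ℝ)
      < ((n : ℝ) - ((n : ℝ) - k) / 2 : ℝ) :=
  alternative_key_equation_forward_general n k β hβ m hm c e Cp hCdeg hC Y hY Λe hΛe hw
end

section
/- Alternative Key Equation (converse direction): Let y, e ∈ F^n and t ∈ ℝ with w_H(e) ≤ t ≤ (n−k)/2, and suppose y − e is a codeword (deg ψ⁻¹(y−e) < k). If some nonzero Λ(x) ∈ F[x] with deg Λ(x) ≤ t satisfies deg(Y(x)Λ(x) mod m(x)) < n − t, then Λ(x) is a polynomial multiple of Λ_e(x). -/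
open Polynomial

/-!
Put `A = Y Λ mod m`. At every position `ℓ` we have `A(β_ℓ) = y_ℓ Λ(β_ℓ)`, which equals
`D(β_ℓ) Λ(β_ℓ)` wherever `e_ℓ = 0`. Both `A` and `D Λ` have degree below `n − t ≤ n − w_H(e)`,
the number of such positions (for `D Λ` because `k + t ≤ n − t`), so `A = D Λ`. Evaluating at
an error position then gives `e_ℓ Λ(β_ℓ) = 0`, so every error location is a root of `Λ`.
-/

namespace Polynomial

theorem eval_mod_of_isRoot {K : Type*} [Field K] {p m : K[X]} {a : K} (h : m.IsRoot a) :
    (p % m).eval a = p.eval a := by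
  rw [EuclideanDomain.mod_eq_sub_mul_div, eval_sub, eval_mul, h.eq_zero, zero_mul, sub_zero]

theorem degree_lt_of_degree_map_natCast_lt {R : Type*} [Semiring R] {p : R[X]} {r : ℝ} {N : ℕ}
    (h : p.degree.map (Nat.cast : ℕ → ℝ) < (r : WithBot ℝ)) (hr : r ≤ N) : p.degree < N := by
  cases hp : p.degree with
  | bot => exact WithBot.bot_lt_coe N
  | coe d =>
    rw [hp, WithBot.map_coe, WithBot.coe_lt_coe] at h
    exact WithBot.coe_lt_coe.mpr (by exact_mod_cast h.trans_le hr)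

theorem degree_mul_lt_of_degree_lt_of_natDegree_le {R : Type*} [Semiring R] {p q : R[X]}
    {a b : ℕ} (hp : p.degree < a) (hq : q.natDegree ≤ b) : (p * q).degree < ↑(a + b) := by
  rcases eq_or_ne p 0 with rfl | hp0
  · simp
  have hpa : p.natDegree < a := (natDegree_lt_iff_degree_lt hp0).mpr hp
  have hpq : (p * q).natDegree < a + b := natDegree_mul_le.trans_lt (by omega)
  exact degree_le_natDegree.trans_lt (by exact_mod_cast hpq)

theorem prod_X_sub_C_dvd_of_eval_eq_zero {K ι : Type*} [Field K] {s : Finset ι} {v : ι → K}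
    {p : K[X]} (hv : Set.InjOn v s) (h : ∀ i ∈ s, p.eval (v i) = 0) :
    ∏ i ∈ s, (X - C (v i)) ∣ p :=
  Finset.prod_dvd_of_coprime
    (fun _ hi _ hj hij =>
      isCoprime_X_sub_C_of_isUnit_sub (sub_ne_zero_of_ne (hv.ne hi hj hij)).isUnit)
    fun i hi => dvd_iff_isRoot.mpr (h i hi)

end Polynomial

theorem alternative_key_equation_converse_general {F : Type*} [Field F] [DecidableEq F]
    (n k : ℕ) (β : Fin n → F) (hβ : Function.Injective β)
    (m : F[X]) (hm : m = ∏ ℓ : Fin n, (X - C (β ℓ)))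
    (y e : Fin n → F) (t : ℝ)
    (hw : ((Finset.univ.filter (fun ℓ => e ℓ ≠ 0)).card : ℝ) ≤ t)
    (ht : t ≤ ((n : ℝ) - k) / 2)
    -- `y − e` is a codeword: `deg ψ⁻¹(y − e) < k`
    (D : F[X]) (hDdeg : D.degree < k) (hD : ∀ ℓ, D.eval (β ℓ) = y ℓ - e ℓ)
    -- `Y = ψ⁻¹(y)`
    (Y : F[X]) (hY : ∀ ℓ, Y.eval (β ℓ) = y ℓ)
    (Λe : F[X]) (hΛe : Λe = ∏ ℓ ∈ Finset.univ.filter (fun ℓ => e ℓ ≠ 0), (X - C (β ℓ)))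
    (Λ : F[X]) (hΛdeg : (Λ.natDegree : ℝ) ≤ t)
    (hkey : (Y * Λ % m).degree.map (Nat.cast : ℕ → ℝ) < ((n : ℝ) - t : ℝ)) :
    Λe ∣ Λ := by
  set errors := Finset.univ.filter (fun ℓ => e ℓ ≠ 0)
  have hcard : ((errorsᶜ.card : ℕ) : ℝ) = n - errors.card := by
    rw [eq_sub_iff_add_eq]; exact_mod_cast errors.card_compl_add_card.trans (Fintype.card_fin n)
  have hmβ : ∀ ℓ, m.IsRoot (β ℓ) := fun ℓ => by
    simp [hm, eval_prod, Finset.prod_eq_zero_iff, sub_eq_zero]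
  have hrem : Y * Λ % m = D * Λ := by
    refine eq_of_degrees_lt_of_eval_index_eq errorsᶜ hβ.injOn
      (degree_lt_of_degree_map_natCast_lt hkey (by linarith))
      ((degree_mul_lt_of_degree_lt_of_natDegree_le hDdeg le_rfl).trans_le ?_) fun ℓ hℓ => ?_
    · exact_mod_cast (show (k : ℝ) + Λ.natDegree ≤ errorsᶜ.card by linarith)
    · have he : e ℓ = 0 := by simpa [errors] using hℓ
      rw [eval_mod_of_isRoot (hmβ ℓ), eval_mul, eval_mul, hY, hD, he, sub_zero]
  have hroots : ∀ ℓ ∈ errors, Λ.eval (β ℓ) = 0 := fun ℓ hℓ => by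
    have h := congrArg (eval (β ℓ)) hrem
    rw [eval_mod_of_isRoot (hmβ ℓ), eval_mul, eval_mul, hY, hD, ← sub_eq_zero, ← sub_mul,
      sub_sub_cancel] at h
    exact (mul_eq_zero.mp h).resolve_left (Finset.mem_filter.mp hℓ).2
  exact hΛe ▸ prod_X_sub_C_dvd_of_eval_eq_zero hβ.injOn hroots

/-- Alternative Key Equation (converse direction): for `y, e` with
`w_H(e) ≤ t ≤ (n−k)/2` and `y − e` a codeword, any nonzero `Λ` with
`deg Λ ≤ t` and `deg(Y(x)Λ(x) mod m(x)) < n − t` is a polynomial multiple of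
the error locator `Λ_e`. -/
theorem alternative_key_equation_converse {F : Type*} [Field F] [Fintype F] [DecidableEq F]
    (n k : ℕ) (β : Fin n → F) (hβ : Function.Injective β)
    (m : F[X]) (hm : m = ∏ ℓ : Fin n, (X - C (β ℓ)))
    (y e : Fin n → F) (t : ℝ)
    (hw : ((Finset.univ.filter (fun ℓ => e ℓ ≠ 0)).card : ℝ) ≤ t)
    (ht : t ≤ ((n : ℝ) - k) / 2)
    -- `y − e` is a codeword: `deg ψ⁻¹(y − e) < k`
    (D : F[X]) (hDdeg : D.degree < k) (hD : ∀ ℓ, D.eval (β ℓ) = y ℓ - e ℓ)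
    -- `Y = ψ⁻¹(y)`
    (Y : F[X]) (hYdeg : Y.degree < n) (hY : ∀ ℓ, Y.eval (β ℓ) = y ℓ)
    (Λe : F[X]) (hΛe : Λe = ∏ ℓ ∈ Finset.univ.filter (fun ℓ => e ℓ ≠ 0), (X - C (β ℓ)))
    (Λ : F[X]) (hΛ : Λ ≠ 0) (hΛdeg : (Λ.natDegree : ℝ) ≤ t)
    (hkey : (Y * Λ % m).degree.map (Nat.cast : ℕ → ℝ) < ((n : ℝ) - t : ℝ)) :
    Λe ∣ Λ :=
  alternative_key_equation_converse_general n k β hβ m hm y e t hw ht D hDdeg hD Y hY Λe hΛe Λ hΛdeg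
    hkey
end

section
/- Codeword recovery: If Λ(x) is a nonzero multiple of Λ_e(x) with deg Λ(x) ≤ n − k, then C(x) = (Y(x)Λ(x) mod m(x)) / Λ(x), i.e., Y(x)Λ(x) mod m(x) = C(x)Λ(x). -/
/-!
`Y - C` vanishes at every error-free position, so the nodal polynomial of those positions divides
it; multiplying by `Λ`, a multiple of `Λ_e`, yields `m ∣ (Y - C) Λ`. Since
`deg (C Λ) < k + (n - k) = n = deg m`, `C Λ` is the remainder of `Y Λ` modulo `m`.
-/

open Polynomial Lagrange

section

variable {F ι : Type*} [Field F]

theorem Lagrange.nodal_dvd_sub_of_eval_eq {s : Finset ι} {v : ι → F} (hv : Set.InjOn v s)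
    {p q : F[X]} (hpq : ∀ i ∈ s, p.eval (v i) = q.eval (v i)) : nodal s v ∣ p - q := by
  refine Finset.prod_dvd_of_coprime (fun i hi j hj hij => ?_) fun i hi => ?_
  · exact isCoprime_X_sub_C_of_isUnit_sub (sub_ne_zero.2 fun h => hij (hv hi hj h)).isUnit
  · rw [dvd_iff_isRoot, IsRoot.def, eval_sub, hpq i hi, sub_self]

theorem Lagrange.nodal_dvd_mul_sub_of_eval_eq [DecidableEq ι] {S T : Finset ι} (hST : S ⊆ T)
    {v : ι → F} (hv : Set.InjOn v T) {p q Λ : F[X]}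
    (hpq : ∀ i ∈ T \ S, p.eval (v i) = q.eval (v i)) (hΛ : nodal S v ∣ Λ) :
    nodal T v ∣ Λ * (p - q) := by
  rw [nodal, ← Finset.prod_sdiff hST, mul_comm]
  exact mul_dvd_mul hΛ (nodal_dvd_sub_of_eval_eq (hv.mono Finset.sdiff_subset) hpq)

theorem Polynomial.mod_eq_of_dvd_sub_of_degree_lt {p q r : F[X]} (h : q ∣ p - r)
    (hr : r.degree < q.degree) : p % q = r := by
  have hq : q ≠ 0 := by rintro rfl; simp at hr
  rw [mod_eq_of_dvd_sub h, (mod_eq_self_iff hq).2 hr]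

end

theorem Polynomial.degree_mul_lt_of_lt_of_natDegree_le {R : Type*} [Semiring R] {p q : R[X]}
    {a b : ℕ} (hp : p.degree < a) (hq : q.natDegree ≤ b) : (p * q).degree < ↑(a + b) :=
  calc (p * q).degree ≤ p.degree + b := degree_mul_le_of_le le_rfl (degree_le_of_natDegree_le hq)
    _ < a + b := WithBot.add_lt_add_right WithBot.coe_ne_bot hp

theorem codeword_recovery_general {F : Type*} [Field F] [DecidableEq F]
    (n k : ℕ) (hk : k ≤ n) (β : Fin n → F) (hβ : Function.Injective β)
    (m : F[X]) (hm : m = ∏ ℓ : Fin n, (X - C (β ℓ)))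
    (c e : Fin n → F)
    -- `C = ψ⁻¹(c)` is a codeword transform, `Y = ψ⁻¹(c + e)`
    (Cp : F[X]) (hCdeg : Cp.degree < k) (hC : ∀ ℓ, Cp.eval (β ℓ) = c ℓ)
    (Y : F[X]) (hY : ∀ ℓ, Y.eval (β ℓ) = c ℓ + e ℓ)
    (Λe : F[X]) (hΛe : Λe = ∏ ℓ ∈ Finset.univ.filter (fun ℓ => e ℓ ≠ 0), (X - C (β ℓ)))
    (Λ : F[X]) (hmul : Λe ∣ Λ) (hΛdeg : Λ.natDegree ≤ n - k) :
    Y * Λ % m = Cp * Λ := by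
  have hm_nodal : m = nodal Finset.univ β := hm
  have hΛe_nodal : Λe = nodal (Finset.univ.filter (fun ℓ => e ℓ ≠ 0)) β := hΛe
  have hagree : ∀ ℓ ∈ Finset.univ \ Finset.univ.filter (fun ℓ => e ℓ ≠ 0),
      Y.eval (β ℓ) = Cp.eval (β ℓ) := by
    intro ℓ hℓ
    simp only [Finset.mem_sdiff, Finset.mem_univ, Finset.mem_filter, true_and, not_not] at hℓ
    rw [hY, hC, hℓ, add_zero]
  have hdvd : m ∣ Y * Λ - Cp * Λ := by
    rw [← sub_mul, mul_comm, hm_nodal]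
    exact nodal_dvd_mul_sub_of_eval_eq (Finset.filter_subset _ _) hβ.injOn hagree
      (hΛe_nodal ▸ hmul)
  have hdeg : (Cp * Λ).degree < m.degree := by
    rw [hm_nodal, degree_nodal, Finset.card_univ, Fintype.card_fin, ← Nat.add_sub_cancel' hk]
    exact degree_mul_lt_of_lt_of_natDegree_le hCdeg hΛdeg
  exact mod_eq_of_dvd_sub_of_degree_lt hdvd hdeg

/-- Codeword recovery: if `Λ` is a nonzero multiple of `Λ_e` with
`deg Λ ≤ n − k`, then `Y(x)Λ(x) mod m(x) = C(x)Λ(x)`. -/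
theorem codeword_recovery {F : Type*} [Field F] [Fintype F] [DecidableEq F]
    (n k : ℕ) (hk : k ≤ n) (β : Fin n → F) (hβ : Function.Injective β)
    (m : F[X]) (hm : m = ∏ ℓ : Fin n, (X - C (β ℓ)))
    (c e : Fin n → F)
    -- `C = ψ⁻¹(c)` is a codeword transform, `Y = ψ⁻¹(c + e)`
    (Cp : F[X]) (hCdeg : Cp.degree < k) (hC : ∀ ℓ, Cp.eval (β ℓ) = c ℓ)
    (Y : F[X]) (hYdeg : Y.degree < n) (hY : ∀ ℓ, Y.eval (β ℓ) = c ℓ + e ℓ)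
    (Λe : F[X]) (hΛe : Λe = ∏ ℓ ∈ Finset.univ.filter (fun ℓ => e ℓ ≠ 0), (X - C (β ℓ)))
    (Λ : F[X]) (hΛ : Λ ≠ 0) (hmul : Λe ∣ Λ) (hΛdeg : Λ.natDegree ≤ n - k) :
    Y * Λ % m = Cp * Λ :=
  codeword_recovery_general n k hk β hβ m hm c e Cp hCdeg hC Y hY Λe hΛe Λ hmul hΛdeg
end

section
/- Irrelevance of low-order coefficients: Suppose Λ(x) is nonzero with deg Λ(x) ≤ deg m(x) − d and deg(b(x)Λ(x) mod m(x)) < d. If b̃(x) agrees with b(x) on all coefficients of index ≥ 2d − deg m(x), and m̃(x) agrees with m(x) on all coefficients of index ≥ 2d − deg m(x) + 1 (with deg m̃ = deg m), then deg(b̃(x)Λ(x) mod m̃(x)) < d as well. -/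
open Polynomial

/-!
Write `bΛ = m q + r` with `deg r < d`; the degree bounds on `b` and `Λ` force `deg q < deg m - d`.
Then `b̃Λ = m̃ q + (r + (b̃ - b)Λ - (m̃ - m) q)`, and both correction terms have degree `< d`:
`b̃ - b` lives below index `2d - deg m` while `deg Λ ≤ deg m - d`, and `m̃ - m` lives at indices
`≤ 2d - deg m` while `deg q < deg m - d`. So the bracket has degree `< d ≤ deg m̃` and is the
remainder of `b̃Λ` modulo `m̃`.
-/

namespace Polynomial

theorem degree_mul_lt_of_coeff_eq_zero {R : Type*} [Semiring R] {f g : R[X]} {a c : ℕ}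
    (hf : ∀ i, a < i + c → f.coeff i = 0) (hg : g.degree < c) : (f * g).degree < a := by
  rw [degree_lt_iff_coeff_zero]
  intro ℓ hℓ
  rw [coeff_mul]
  refine Finset.sum_eq_zero fun ⟨i, j⟩ hij => ?_
  rw [Finset.HasAntidiagonal.mem_antidiagonal] at hij
  by_cases hj : j < c
  · rw [hf i (by omega), zero_mul]
  · rw [coeff_eq_zero_of_degree_lt (hg.trans_le (by exact_mod_cast not_lt.1 hj)), mul_zero]

variable {K : Type*} [Field K]

theorem degree_div_lt_of_degree_lt_add {p q : K[X]} {k : ℕ} (hq : q ≠ 0)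
    (hp : p.degree < q.degree + k) : (p / q).degree < k := by
  by_cases hqp : q.degree ≤ p.degree
  · rw [← degree_add_div hq hqp] at hp
    exact (WithBot.add_lt_add_iff_left (degree_ne_bot.2 hq)).1 hp
  · rw [(Polynomial.div_eq_zero_iff hq).2 (not_le.1 hqp), degree_zero]
    exact WithBot.bot_lt_coe k

theorem mod_eq_of_dvd_sub_of_degree_lt_s17 {p q r : K[X]} (hq : q ≠ 0) (hdvd : q ∣ p - r)
    (hr : r.degree < q.degree) : p % q = r := by
  rw [mod_eq_of_dvd_sub hdvd, (mod_eq_self_iff hq).2 hr]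

end Polynomial

theorem low_order_coefficients_irrelevant_general {F : Type*} [Field F] (b m : F[X])
    (hm : m ≠ 0) (hdeg : b.degree < m.degree)
    (d : ℕ) (hd2 : d ≤ m.natDegree)
    (Λ : F[X]) (hΛdeg : Λ.natDegree + d ≤ m.natDegree)
    (hkey : (b * Λ % m).degree < (d : WithBot ℕ))
    (btilde mtilde : F[X])
    (hbt : ∀ ℓ : ℕ, (2 * d : ℤ) - m.natDegree ≤ ℓ → btilde.coeff ℓ = b.coeff ℓ)
    (hmt : ∀ ℓ : ℕ, (2 * d : ℤ) - m.natDegree + 1 ≤ ℓ → mtilde.coeff ℓ = m.coeff ℓ)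
    (hmtdeg : mtilde.degree = m.degree) :
    (btilde * Λ % mtilde).degree < (d : WithBot ℕ) := by
  set n := m.natDegree
  have hmn : m.degree = n := degree_eq_natDegree hm
  have hΛ : Λ.degree ≤ ↑(n - d) := degree_le_of_natDegree_le (by omega)
  set q := b * Λ / m
  have hq : q.degree < ↑(n - d) := by
    refine degree_div_lt_of_degree_lt_add hm ((degree_mul_le b Λ).trans_lt ?_)
    calc b.degree + Λ.degree ≤ b.degree + ↑(n - d) := add_le_add_right hΛ _
      _ < m.degree + ↑(n - d) := WithBot.add_lt_add_right WithBot.coe_ne_bot hdeg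
  have hbΛ : ((btilde - b) * Λ).degree < d :=
    degree_mul_lt_of_coeff_eq_zero (c := n - d + 1)
      (fun i hi => by rw [coeff_sub, hbt i (by omega), sub_self])
      (hΛ.trans_lt (by exact_mod_cast (n - d).lt_succ_self))
  have hmq : ((mtilde - m) * q).degree < d :=
    degree_mul_lt_of_coeff_eq_zero (fun i hi => by rw [coeff_sub, hmt i (by omega), sub_self]) hq
  have hmt0 : mtilde ≠ 0 := by rw [← degree_ne_bot, hmtdeg]; exact degree_ne_bot.2 hm
  have hr : (b * Λ % m + (btilde - b) * Λ - (mtilde - m) * q).degree < d :=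
    (degree_sub_le _ _).trans_lt <| max_lt ((degree_add_le _ _).trans_lt (max_lt hkey hbΛ)) hmq
  rwa [mod_eq_of_dvd_sub_of_degree_lt_s17 hmt0 ⟨q, ?_⟩ (hr.trans_le ?_)]
  · linear_combination -EuclideanDomain.div_add_mod (b * Λ) m
  · rw [hmtdeg, hmn]; exact_mod_cast hd2

/-- Irrelevance of low-order coefficients: if `Λ ≠ 0` with
`deg Λ ≤ deg m − d` and `deg(bΛ mod m) < d`, and `b̃` agrees with `b` on all
coefficients of index `≥ 2d − deg m`, and `m̃` agrees with `m` on all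
coefficients of index `≥ 2d − deg m + 1` (with `deg m̃ = deg m`), then
`deg(b̃Λ mod m̃) < d` as well. -/
theorem low_order_coefficients_irrelevant {F : Type*} [Field F] (b m : F[X])
    (hb : b ≠ 0) (hm : m ≠ 0) (hdeg : b.degree < m.degree)
    (d : ℕ) (hd1 : 1 ≤ d) (hd2 : d ≤ m.natDegree)
    (Λ : F[X]) (hΛ : Λ ≠ 0) (hΛdeg : Λ.natDegree + d ≤ m.natDegree)
    (hkey : (b * Λ % m).degree < (d : WithBot ℕ))
    (btilde mtilde : F[X])
    (hbt : ∀ ℓ : ℕ, (2 * d : ℤ) - m.natDegree ≤ ℓ → btilde.coeff ℓ = b.coeff ℓ)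
    (hmt : ∀ ℓ : ℕ, (2 * d : ℤ) - m.natDegree + 1 ≤ ℓ → mtilde.coeff ℓ = m.coeff ℓ)
    (hmtdeg : mtilde.degree = m.degree) :
    (btilde * Λ % mtilde).degree < (d : WithBot ℕ) :=
  low_order_coefficients_irrelevant_general b m hm hdeg d hd2 Λ hΛdeg hkey btilde mtilde hbt hmt
    hmtdeg
end
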